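/- arXiv:2601.18038 — 2 statements merged into one kernel-verified Lean document; each statement's English description precedes it below -/
import Mathlib

section
/- Let φ : X → ℝ ∪ {∞} be a proper lower semicontinuous convex function on a Euclidean space with x̄ ∈ dom φ and v̄ ∈ ∂φ(x̄). If φ satisfies the quadratic growth condition at x̄ for v̄ (equivalently, ∂φ is metrically subregular at x̄ for v̄), then the kernel of the subgradient graphical derivative D∂φ(x̄|v̄) equals the tangent cone T_{∂φ*(v̄)}(x̄), where φ* is the Fenchel conjugate. -/
open Filter Topology Metric Set
open scoped RealInnerProductSpace NNReal ENNReal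

noncomputable section

/-- Bouligand (contingent) tangent cone. -/
def tanCone {G : Type*} [AddCommGroup G] [Module ℝ G] [TopologicalSpace G]
    (s : Set G) (x : G) : Set G :=
  {w | ∃ (t : ℕ → ℝ) (wk : ℕ → G), (∀ n, 0 < t n) ∧
    Tendsto t atTop (𝓝 0) ∧ Tendsto wk atTop (𝓝 w) ∧ ∀ n, x + t n • wk n ∈ s}

variable {E F : Type*} [NormedAddCommGroup E] [InnerProductSpace ℝ E]
  [NormedAddCommGroup F] [InnerProductSpace ℝ F]

/-- Graph of a set-valued mapping. -/
def gph (S : E → Set F) : Set (E × F) := {p | p.2 ∈ S p.1}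

/-- Graphical derivative. -/
def gder (S : E → Set F) (x : E) (y : F) (w : E) : Set F :=
  {z | (w, z) ∈ tanCone (gph S) (x, y)}

/-- Local closedness of the graph around a point. -/
def LocallyClosedGraph (S : E → Set F) (x : E) (y : F) : Prop :=
  ∃ U ∈ 𝓝 ((x, y) : E × F), IsClosed (U ∩ gph S)

/-- Metric subregularity of a set-valued mapping at `x` for `y`. -/
def MetrSubreg (S : E → Set F) (x : E) (y : F) : Prop :=
  ∃ κ : ℝ≥0, ∃ ε : ℝ, 0 < ε ∧ ∀ x' ∈ ball x ε,
    EMetric.infEdist x' {u | y ∈ S u} ≤ (κ : ℝ≥0∞) * EMetric.infEdist y (S x')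

/-- Convex subdifferential of an extended-real-valued function. -/
def subdiff (φ : E → EReal) (x : E) : Set E :=
  {v | ∀ u, φ x + ((⟪v, u - x⟫ : ℝ) : EReal) ≤ φ u}

/-- Properness. -/
def ProperFn (φ : E → EReal) : Prop := (∀ x, φ x ≠ ⊥) ∧ ∃ x, φ x ≠ ⊤

/-- Convexity via the epigraph. -/
def ConvexFn (φ : E → EReal) : Prop := Convex ℝ {p : E × ℝ | φ p.1 ≤ (p.2 : EReal)}

/-- Fenchel conjugate. -/
def conjFn (φ : E → EReal) (v : E) : EReal := ⨆ x, ((⟪v, x⟫ : ℝ) : EReal) - φ x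

/-- Second subderivative. -/
def secondSubderiv (φ : E → EReal) (x v w : E) : EReal :=
  Filter.liminf (fun p : ℝ × E =>
    (((2 / p.1 ^ 2 : ℝ)) : EReal) *
      (φ (x + p.1 • p.2) - φ x - ((p.1 * ⟪v, p.2⟫ : ℝ) : EReal)))
    ((𝓝[>] (0 : ℝ)) ×ˢ 𝓝 w)

/-- Quadratic growth condition at `x` for `v`. -/
def QuadGrowth (φ : E → EReal) (x v : E) : Prop :=
  ∃ c : ℝ, 0 < c ∧ ∃ ε : ℝ, 0 < ε ∧ ∀ u ∈ ball x ε,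
    φ x + ((⟪v, u - x⟫ + c / 2 * (infDist u {u' | v ∈ subdiff φ u'}) ^ 2 : ℝ) : EReal) ≤ φ u

/-!
Write `S = (∂φ)⁻¹(v̄)`. The Fenchel–Young equality gives `S ⊆ ∂φ*(v̄)`; conversely, if `u ∈ ∂φ*(v̄)`
but `φ u` exceeded `⟨v̄, u⟩ - φ*(v̄)`, a hyperplane separating that point from the closed convex
epigraph of `φ` would yield an affine minorant of `φ` violating the subgradient inequality of `φ*`
at `v̄`. Hence `∂φ*(v̄) = S`.

If `v̄ + t z ∈ ∂φ(x̄ + t w)`, adding the subgradient inequality at `x̄ + t w` to the quadratic growth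
inequality gives `(c/2) d(x̄ + t w, S)² ≤ t² ⟨z, w⟩`. Along a sequence with `z → 0` this makes
`d(x̄ + t w, S) = o(t)`, so `w` is tangent to `S`. Conversely, points `x̄ + t w ∈ S` are graph points
`(x̄ + t w, v̄)`, so `(w, 0)` is tangent to the graph.
-/

lemma ProperFn.exists_eq_coe_of_mem_subdiff {φ : E → EReal} (hproper : ProperFn φ) {x v : E}
    (hv : v ∈ subdiff φ x) : ∃ α : ℝ, φ x = α := by
  obtain ⟨x₀, hx₀⟩ := hproper.2
  have hx : φ x ≠ ⊤ := fun h => hx₀ <| top_le_iff.mp <| by simpa [h] using hv x₀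
  exact ⟨(φ x).toReal, (EReal.coe_toReal hx (hproper.1 x)).symm⟩

lemma inner_sub_le_conjFn (φ : E → EReal) (v x : E) :
    ((⟪v, x⟫ : ℝ) : EReal) - φ x ≤ conjFn φ v :=
  le_iSup (fun u => ((⟪v, u⟫ : ℝ) : EReal) - φ u) x

lemma coe_inner_sub_le_of_conjFn_eq {φ : E → EReal} {v : E} {β : ℝ} (hβ : conjFn φ v = β)
    (x : E) : ((⟪v, x⟫ - β : ℝ) : EReal) ≤ φ x := by
  have h := inner_sub_le_conjFn φ v x
  rw [hβ] at h
  induction hx : φ x using EReal.rec with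
  | bot => simp [hx] at h
  | coe r =>
    rw [hx, ← EReal.coe_sub, EReal.coe_le_coe_iff] at h
    exact_mod_cast (by linarith : ⟪v, x⟫ - β ≤ r)
  | top => exact le_top

lemma conjFn_le_of_forall {φ : E → EReal} (hbot : ∀ x, φ x ≠ ⊥) {v : E} {c : ℝ}
    (h : ∀ x (r : ℝ), φ x = r → ⟪v, x⟫ - r ≤ c) : conjFn φ v ≤ c := by
  refine iSup_le fun x => ?_
  induction hx : φ x using EReal.rec with
  | bot => exact absurd hx (hbot x)
  | coe r => exact_mod_cast h x r hx
  | top => simp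

lemma conjFn_eq_of_mem_subdiff {φ : E → EReal} (hproper : ProperFn φ) {x v : E} {α : ℝ}
    (hv : v ∈ subdiff φ x) (hα : φ x = α) : conjFn φ v = ((⟪v, x⟫ - α : ℝ) : EReal) := by
  refine le_antisymm (conjFn_le_of_forall hproper.1 fun y r hy => ?_) ?_
  · have h : α + ⟪v, y - x⟫ ≤ r := by exact_mod_cast hα ▸ hy ▸ hv y
    linarith [inner_sub_right (𝕜 := ℝ) v y x]
  · simpa [hα] using inner_sub_le_conjFn φ v x

lemma mem_subdiff_conjFn_of_mem_subdiff {φ : E → EReal} (hproper : ProperFn φ) {x v : E}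
    (hv : v ∈ subdiff φ x) : x ∈ subdiff (conjFn φ) v := by
  obtain ⟨α, hα⟩ := hproper.exists_eq_coe_of_mem_subdiff hv
  intro p
  rw [conjFn_eq_of_mem_subdiff hproper hv hα]
  refine le_trans (le_of_eq ?_) (inner_sub_le_conjFn φ p x)
  rw [hα, ← EReal.coe_add, ← EReal.coe_sub, inner_sub_right, real_inner_comm x p,
    real_inner_comm x v]
  ring_nf

lemma exists_separation_of_not_le [CompleteSpace E] {φ : E → EReal}
    (hlsc : LowerSemicontinuous φ) (hconv : ConvexFn φ) {u : E} {m : ℝ} (hm : ¬ φ u ≤ m) :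
    ∃ (a : E) (b s : ℝ), ⟪a, u⟫ + m * b < s ∧ ∀ x (r : ℝ), φ x ≤ r → s < ⟪a, x⟫ + r * b := by
  have hclosed : IsClosed {p : E × ℝ | φ p.1 ≤ (p.2 : EReal)} :=
    (lowerSemicontinuous_iff_isClosed_epigraph.mp hlsc).preimage
      (continuous_fst.prodMk (continuous_coe_real_ereal.comp continuous_snd))
  obtain ⟨f, s, hfu, hf⟩ := geometric_hahn_banach_point_closed hconv hclosed (show (u, m) ∉ _ from hm)
  set a := (InnerProductSpace.toDual ℝ E).symm (f.comp (ContinuousLinearMap.inl ℝ E ℝ))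
  have hf_apply : ∀ x (r : ℝ), f (x, r) = ⟪a, x⟫ + r * f (0, 1) := fun x r => by
    rw [InnerProductSpace.toDual_symm_apply, ← smul_eq_mul, ← map_smul,
      ContinuousLinearMap.comp_apply, ← map_add]
    simp
  exact ⟨a, f (0, 1), s, hf_apply u m ▸ hfu, fun x r hr => hf_apply x r ▸ hf (x, r) hr⟩

lemma le_of_mem_subdiff_conjFn [CompleteSpace E] {φ : E → EReal} (hproper : ProperFn φ)
    (hlsc : LowerSemicontinuous φ) (hconv : ConvexFn φ) {u v : E} {β : ℝ}
    (hβ : conjFn φ v = β) (hu : u ∈ subdiff (conjFn φ) v) :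
    φ u ≤ ((⟪v, u⟫ - β : ℝ) : EReal) := by
  by_contra hm
  obtain ⟨a, b, s, hsu, hs⟩ := exists_separation_of_not_le hlsc hconv hm
  -- `μ ⟨v, x⟩ - μ φ x ≤ μ β` plus the separation bound is an affine minorant of `(μ + b) φ`,
  -- and `μ = |b| + 1` makes `μ + b` positive whatever the sign of `b`.
  set μ := |b| + 1
  have hμ : 0 < μ := by positivity
  have hμb : 0 < μ + b := by linarith [neg_abs_le b]
  set p := (μ + b)⁻¹ • (μ • v - a)
  have hp : ∀ x, ⟪p, x⟫ * (μ + b) = μ * ⟪v, x⟫ - ⟪a, x⟫ := fun x => by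
    rw [real_inner_smul_left, inner_sub_left, real_inner_smul_left]
    field_simp
  have hconj : conjFn φ p ≤ (((μ * β - s) / (μ + b) : ℝ) : EReal) :=
    conjFn_le_of_forall hproper.1 fun x r hr => by
      have h₁ := hs x r hr.le
      have h₂ : ⟪v, x⟫ - β ≤ r := by exact_mod_cast hr ▸ coe_inner_sub_le_of_conjFn_eq hβ x
      rw [le_div_iff₀ hμb, sub_mul, hp]
      nlinarith [mul_le_mul_of_nonneg_left h₂ hμ.le]
  have h : β + ⟪u, p - v⟫ ≤ (μ * β - s) / (μ + b) := by
    exact_mod_cast hβ ▸ (hu p).trans hconj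
  rw [le_div_iff₀ hμb, add_mul, inner_sub_right, sub_mul, real_inner_comm p u, hp,
    real_inner_comm v u] at h
  nlinarith

lemma subdiff_conjFn_eq [CompleteSpace E] {φ : E → EReal} (hproper : ProperFn φ)
    (hlsc : LowerSemicontinuous φ) (hconv : ConvexFn φ) {x v : E} (hv : v ∈ subdiff φ x) :
    subdiff (conjFn φ) v = {u | v ∈ subdiff φ u} := by
  ext u
  refine ⟨fun hu y => ?_, mem_subdiff_conjFn_of_mem_subdiff hproper⟩
  obtain ⟨α, hα⟩ := hproper.exists_eq_coe_of_mem_subdiff hv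
  have hβ := conjFn_eq_of_mem_subdiff hproper hv hα
  calc φ u + ((⟪v, y - u⟫ : ℝ) : EReal)
      ≤ ((⟪v, u⟫ - (⟪v, x⟫ - α) : ℝ) : EReal) + ((⟪v, y - u⟫ : ℝ) : EReal) :=
        by gcongr; exact le_of_mem_subdiff_conjFn hproper hlsc hconv hβ hu
    _ = ((⟪v, y⟫ - (⟪v, x⟫ - α) : ℝ) : EReal) := by
        rw [← EReal.coe_add, inner_sub_right]; ring_nf
    _ ≤ φ y := coe_inner_sub_le_of_conjFn_eq hβ y

lemma mem_tanCone_of_tendsto_infDist_div {G : Type*} [NormedAddCommGroup G] [NormedSpace ℝ G]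
    {s : Set G} (hs : s.Nonempty) {x w : G} {t : ℕ → ℝ} {wk : ℕ → G} (htpos : ∀ n, 0 < t n)
    (ht : Tendsto t atTop (𝓝 0)) (hwk : Tendsto wk atTop (𝓝 w))
    (hd : Tendsto (fun n => infDist (x + t n • wk n) s / t n) atTop (𝓝 0)) :
    w ∈ tanCone s x := by
  have hy : ∀ n, ∃ y ∈ s, dist (x + t n • wk n) y < infDist (x + t n • wk n) s + t n ^ 2 :=
    fun n => (infDist_lt_iff hs).1 (lt_add_of_pos_right _ (pow_pos (htpos n) 2))
  choose y hys hy using hy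
  refine ⟨t, fun n => (t n)⁻¹ • (y n - x), htpos, ht, ?_, fun n => ?_⟩
  · have hnorm : ∀ n, ‖(t n)⁻¹ • (y n - x) - wk n‖ ≤ infDist (x + t n • wk n) s / t n + t n :=
      fun n => by
        have htn := htpos n
        have heq : (t n)⁻¹ • (y n - x) - wk n = (t n)⁻¹ • (y n - (x + t n • wk n)) := by
          rw [smul_sub, smul_sub, smul_add, smul_smul, inv_mul_cancel₀ htn.ne', one_smul]
          abel
        rw [heq, norm_smul, Real.norm_of_nonneg (inv_nonneg.2 htn.le), ← dist_eq_norm',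
          inv_mul_le_iff₀ htn, mul_add, mul_div_cancel₀ _ htn.ne']
        nlinarith [hy n]
    have hlim := (squeeze_zero_norm hnorm (by simpa using hd.add ht)).add hwk
    simpa using hlim
  · rw [smul_smul, mul_inv_cancel₀ (htpos n).ne', one_smul, add_sub_cancel]
    exact hys n

lemma zero_mem_gder_of_mem_tanCone {S : E → Set F} {x : E} {y : F} {w : E}
    (hw : w ∈ tanCone {u | y ∈ S u} x) : (0 : F) ∈ gder S x y w := by
  obtain ⟨t, wk, htpos, ht, hwk, hmem⟩ := hw
  refine ⟨t, fun n => (wk n, 0), htpos, ht, hwk.prodMk_nhds tendsto_const_nhds, fun n => ?_⟩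
  simpa [gph] using hmem n

lemma QuadGrowth.exists_sq_infDist_le {φ : E → EReal} (hproper : ProperFn φ) {x v : E}
    (hv : v ∈ subdiff φ x) (hqg : QuadGrowth φ x v) :
    ∃ c > 0, ∀ᶠ u in 𝓝 x, ∀ z, v + z ∈ subdiff φ u →
      c / 2 * infDist u {u' | v ∈ subdiff φ u'} ^ 2 ≤ ⟪z, u - x⟫ := by
  obtain ⟨c, hc, ε, hε, hgrowth⟩ := hqg
  refine ⟨c, hc, eventually_of_mem (ball_mem_nhds x hε) fun u hu z hz => ?_⟩
  obtain ⟨α, hα⟩ := hproper.exists_eq_coe_of_mem_subdiff hv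
  obtain ⟨β, hβ⟩ := hproper.exists_eq_coe_of_mem_subdiff hz
  have h₁ := hgrowth u hu
  have h₂ := hz x
  rw [hα, hβ] at h₁ h₂
  norm_cast at h₁ h₂
  have : x - u = -(u - x) := (neg_sub u x).symm
  rw [this, inner_neg_right, inner_add_left] at h₂
  linarith

lemma mem_tanCone_of_zero_mem_gder {φ : E → EReal} (hproper : ProperFn φ) {x v w : E}
    (hv : v ∈ subdiff φ x) (hqg : QuadGrowth φ x v) (hw : (0 : E) ∈ gder (subdiff φ) x v w) :
    w ∈ tanCone {u | v ∈ subdiff φ u} x := by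
  obtain ⟨c, hc, hgrowth⟩ := hqg.exists_sq_infDist_le hproper hv
  obtain ⟨t, p, htpos, ht, hp, hmem⟩ := hw
  have hw : Tendsto (fun n => (p n).1) atTop (𝓝 w) := (continuous_fst.tendsto _).comp hp
  have hz : Tendsto (fun n => (p n).2) atTop (𝓝 0) := (continuous_snd.tendsto _).comp hp
  have hu : Tendsto (fun n => x + t n • (p n).1) atTop (𝓝 x) := by
    simpa using tendsto_const_nhds.add (ht.smul hw)
  have hbound : ∀ᶠ n in atTop, infDist (x + t n • (p n).1) {u | v ∈ subdiff φ u} / t n ≤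
      √(2 / c * ⟪(p n).2, (p n).1⟫) := (hu.eventually hgrowth).mono fun n hn => by
    have h := hn (t n • (p n).2) (by simpa [gph] using hmem n)
    rw [add_sub_cancel_left, real_inner_smul_left, real_inner_smul_right] at h
    apply Real.le_sqrt_of_sq_le
    rw [div_pow, div_le_iff₀ (pow_pos (htpos n) 2)]
    field_simp
    linarith
  have hsqrt : Tendsto (fun n => √(2 / c * ⟪(p n).2, (p n).1⟫)) atTop (𝓝 0) := by
    simpa using ((hz.inner hw).const_mul (2 / c)).sqrt
  exact mem_tanCone_of_tendsto_infDist_div ⟨x, hv⟩ htpos ht hw <| squeeze_zero'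
    (Eventually.of_forall fun n => div_nonneg infDist_nonneg (htpos n).le) hbound hsqrt

/-- under the quadratic growth condition, the kernel of the subgradient
graphical derivative equals the tangent cone to `∂φ*(vb)` at `xb`. -/
theorem stmt2 {E : Type*} [NormedAddCommGroup E] [InnerProductSpace ℝ E]
    [FiniteDimensional ℝ E]
    (φ : E → EReal) (hproper : ProperFn φ) (hlsc : LowerSemicontinuous φ)
    (hconv : ConvexFn φ) (xb vb : E) (hsub : vb ∈ subdiff φ xb)
    (hqg : QuadGrowth φ xb vb) :
    {w | (0 : E) ∈ gder (subdiff φ) xb vb w} = tanCone (subdiff (conjFn φ) vb) xb := by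
  have := FiniteDimensional.complete ℝ E
  rw [subdiff_conjFn_eq hproper hlsc hconv hsub]
  ext w
  exact ⟨mem_tanCone_of_zero_mem_gder hproper hsub hqg, zero_mem_gder_of_mem_tanCone⟩

end
end

section
/- Let g : Y → ℝ ∪ {∞} be proper l.s.c. convex on a Euclidean space Y, K : X → Y linear, x̄ ∈ X, v̄ ∈ X, and ȳ ∈ ∂g(Kx̄) with K*ȳ = v̄. Define h(x) = g(Kx). If g satisfies the quadratic growth condition at Kx̄ for ȳ, then Ker d²h(x̄|v̄) ⊆ K⁻¹(T_{∂g*(ȳ)}(Kx̄)), i.e., every w with d²h(x̄|v̄)(w) = 0 satisfies Kw ∈ T_{∂g*(ȳ)}(Kx̄). -/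
/-!
Quadratic growth bounds the second-order difference quotient of `g` at `K x̄` for `ȳ` along
`K w'` from below by `c (dist (K x̄ + t K w', (∂g)⁻¹ ȳ) / t)²`, and this quotient is the one of
`h = g ∘ K` at `x̄` for `K* ȳ` along `w'`. Hence if `d²h(x̄|v̄)(w) = 0` there are `t ↓ 0`, `w' → w`
with `K x̄ + t K w'` at distance `o(t)` from `(∂g)⁻¹ ȳ`, which puts `K w` in the tangent cone of
`(∂g)⁻¹ ȳ`; and `(∂g)⁻¹ ȳ ⊆ ∂g*(ȳ)` by the Fenchel–Young equality.
-/

open Filter Topology Metric Set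
open scoped RealInnerProductSpace NNReal ENNReal

noncomputable section

variable {E F : Type*} [NormedAddCommGroup E] [InnerProductSpace ℝ E]
  [NormedAddCommGroup F] [InnerProductSpace ℝ F]

lemma tanCone_mono {G : Type*} [AddCommGroup G] [Module ℝ G] [TopologicalSpace G]
    {s s' : Set G} (h : s ⊆ s') (x : G) : tanCone s x ⊆ tanCone s' x :=
  fun _ ⟨t, wk, ht, ht0, hwk, hs⟩ => ⟨t, wk, ht, ht0, hwk, fun n => h (hs n)⟩

section TangentCone

variable {G : Type*} [NormedAddCommGroup G] [NormedSpace ℝ G] {s : Set G} {x w : G}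

lemma mem_tanCone_of_forall_exists
    (h : ∀ ε > 0, ∃ t ∈ Ioo 0 ε, ∃ z, dist z w < ε ∧ x + t • z ∈ s) : w ∈ tanCone s x := by
  choose t ht z hz hs using fun n : ℕ => h (1 / (n + 1)) Nat.one_div_pos_of_nat
  refine ⟨t, z, fun n => (ht n).1, ?_, ?_, hs⟩
  · exact squeeze_zero (fun n => (ht n).1.le) (fun n => (ht n).2.le)
      tendsto_one_div_add_atTop_nhds_zero_nat
  · exact tendsto_iff_dist_tendsto_zero.2 <| squeeze_zero (fun _ => dist_nonneg)
      (fun n => (hz n).le) tendsto_one_div_add_atTop_nhds_zero_nat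

lemma mem_tanCone_of_frequently_infDist_lt (hs : s.Nonempty)
    (h : ∀ δ > 0, ∃ᶠ p : ℝ × G in 𝓝[>] 0 ×ˢ 𝓝 w, infDist (x + p.1 • p.2) s < p.1 * δ) :
    w ∈ tanCone s x := by
  refine mem_tanCone_of_forall_exists fun ε hε => ?_
  have hsmall : ∀ᶠ p : ℝ × G in 𝓝[>] 0 ×ˢ 𝓝 w, p.1 ∈ Ioo 0 ε ∧ p.2 ∈ ball w (ε / 2) :=
    prod_mem_prod (Ioo_mem_nhdsGT hε) (ball_mem_nhds w (half_pos hε))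
  obtain ⟨⟨t, y⟩, hdist, ht, hy⟩ := ((h _ (half_pos hε)).and_eventually hsmall).exists
  obtain ⟨u, hu, hyu⟩ := (infDist_lt_iff hs).1 hdist
  refine ⟨t, ht, t⁻¹ • (u - x), ?_, by rwa [smul_inv_smul₀ ht.1.ne', add_sub_cancel]⟩
  -- rescaling `x + t • y` and its near point `u ∈ s` by `t⁻¹` divides their distance by `t`
  have hscaled : dist (t⁻¹ • (u - x)) y < ε / 2 := by
    have : t⁻¹ • (u - x) - y = t⁻¹ • (u - (x + t • y)) := by
      rw [smul_sub, smul_sub, smul_add, inv_smul_smul₀ ht.1.ne']; abel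
    rw [dist_eq_norm, this, norm_smul, norm_inv, Real.norm_eq_abs, abs_of_pos ht.1,
      ← dist_eq_norm', inv_mul_lt_iff₀ ht.1]
    exact hyu
  calc dist (t⁻¹ • (u - x)) w ≤ dist (t⁻¹ • (u - x)) y + dist y w := dist_triangle _ _ _
    _ < ε / 2 + ε / 2 := add_lt_add hscaled hy
    _ = ε := add_halves ε

end TangentCone

section ConjugateFunction

variable {g : F → EReal} {u y : F}

lemma ProperFn.exists_eq_coe_of_mem_subdiff_s13 (hg : ProperFn g) (hy : y ∈ subdiff g u) :
    ∃ r : ℝ, g u = r := by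
  obtain ⟨hbot, x, hx⟩ := hg
  have htop : g u ≠ ⊤ := fun h => hx <| top_le_iff.1 <| by simpa [h] using hy x
  exact ⟨(g u).toReal, (EReal.coe_toReal htop (hbot u)).symm⟩

lemma coe_inner_sub_le_conjFn (g : F → EReal) (v x : F) :
    ((⟪v, x⟫ : ℝ) : EReal) - g x ≤ conjFn g v :=
  le_iSup (fun x => ((⟪v, x⟫ : ℝ) : EReal) - g x) x

lemma conjFn_eq_of_mem_subdiff_s13 {r : ℝ} (hu : g u = r) (hy : y ∈ subdiff g u) :
    conjFn g y = ((⟪y, u⟫ - r : ℝ) : EReal) := by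
  refine le_antisymm (iSup_le fun x => ?_) (by simpa [hu] using coe_inner_sub_le_conjFn g y u)
  have hx : ((r + ⟪y, x - u⟫ : ℝ) : EReal) ≤ g x := by simpa [hu] using hy x
  calc ((⟪y, x⟫ : ℝ) : EReal) - g x ≤ ((⟪y, x⟫ : ℝ) : EReal) - ((r + ⟪y, x - u⟫ : ℝ) : EReal) :=
        EReal.sub_le_sub le_rfl hx
    _ = ((⟪y, u⟫ - r : ℝ) : EReal) := by
        rw [← EReal.coe_sub, EReal.coe_eq_coe_iff, inner_sub_right]; ring

lemma mem_subdiff_conjFn_of_mem_subdiff_s13 (hg : ProperFn g) (hy : y ∈ subdiff g u) :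
    u ∈ subdiff (conjFn g) y := by
  obtain ⟨r, hu⟩ := hg.exists_eq_coe_of_mem_subdiff_s13 hy
  intro v
  rw [conjFn_eq_of_mem_subdiff_s13 hu hy]
  refine le_trans (le_of_eq ?_) (by simpa [hu] using coe_inner_sub_le_conjFn g v u)
  rw [← EReal.coe_add, ← EReal.coe_sub, EReal.coe_eq_coe_iff, inner_sub_right,
    real_inner_comm u v, real_inner_comm u y]
  ring

end ConjugateFunction

section SecondSubderivative

def secondDiffQuot (φ : E → EReal) (x v : E) (t : ℝ) (w : E) : EReal :=
  ((2 / t ^ 2 : ℝ) : EReal) * (φ (x + t • w) - φ x - ((t * ⟪v, w⟫ : ℝ) : EReal))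

lemma secondSubderiv_eq_liminf (φ : E → EReal) (x v w : E) :
    secondSubderiv φ x v w =
      liminf (fun p : ℝ × E => secondDiffQuot φ x v p.1 p.2) (𝓝[>] 0 ×ˢ 𝓝 w) :=
  rfl

variable [FiniteDimensional ℝ E] [FiniteDimensional ℝ F]

lemma secondDiffQuot_comp (g : F → EReal) (K : E →ₗ[ℝ] F) (x : E) (y : F) (t : ℝ) (w : E) :
    secondDiffQuot (fun x => g (K x)) x (LinearMap.adjoint K y) t w =
      secondDiffQuot g (K x) y t (K w) := by
  simp only [secondDiffQuot, map_add, map_smul, LinearMap.adjoint_inner_left]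

lemma secondSubderiv_le_secondSubderiv_comp (g : F → EReal) (K : E →ₗ[ℝ] F) (x : E) (y : F)
    (w : E) :
    secondSubderiv g (K x) y (K w) ≤
      secondSubderiv (fun x => g (K x)) x (LinearMap.adjoint K y) w := by
  have hK : Tendsto (Prod.map id K) (𝓝[>] (0 : ℝ) ×ˢ 𝓝 w) (𝓝[>] 0 ×ˢ 𝓝 (K w)) :=
    tendsto_id.prodMap (K.continuous_of_finiteDimensional.tendsto w)
  simp only [secondSubderiv_eq_liminf, secondDiffQuot_comp]
  exact hK.liminf_le_liminf_comp

end SecondSubderivative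

section QuadraticGrowth

variable {g : F → EReal} {u y : F}

lemma coe_mul_sq_div_le_secondDiffQuot (hbot : ∀ x, g x ≠ ⊥) {r c d t : ℝ} (hu : g u = r)
    (ht : 0 < t) {z : F}
    (hgrowth : g u + ((⟪y, t • z⟫ + c / 2 * d ^ 2 : ℝ) : EReal) ≤ g (u + t • z)) :
    ((c * (d / t) ^ 2 : ℝ) : EReal) ≤ secondDiffQuot g u y t z := by
  rw [secondDiffQuot, hu]
  rcases eq_or_ne (g (u + t • z)) ⊤ with htop | htop
  · rw [htop, EReal.top_sub_coe, EReal.top_sub_coe, EReal.coe_mul_top_of_pos (by positivity)]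
    exact le_top
  · lift g (u + t • z) to ℝ using ⟨htop, hbot _⟩ with s
    rw [hu, ← EReal.coe_add, EReal.coe_le_coe_iff, real_inner_smul_right] at hgrowth
    rw [← EReal.coe_sub, ← EReal.coe_sub, ← EReal.coe_mul, EReal.coe_le_coe_iff]
    calc c * (d / t) ^ 2 = 2 / t ^ 2 * (c / 2 * d ^ 2) := by field_simp
      _ ≤ 2 / t ^ 2 * (s - r - t * ⟪y, z⟫) := by gcongr; linarith

lemma QuadGrowth.eventually_le_secondDiffQuot (hg : ProperFn g) (hy : y ∈ subdiff g u)
    (hqg : QuadGrowth g u y) :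
    ∃ c > 0, ∀ z, ∀ᶠ p : ℝ × F in 𝓝[>] 0 ×ˢ 𝓝 z,
      ((c * (infDist (u + p.1 • p.2) {u' | y ∈ subdiff g u'} / p.1) ^ 2 : ℝ) : EReal) ≤
        secondDiffQuot g u y p.1 p.2 := by
  obtain ⟨c, hc, ε, hε, hgrowth⟩ := hqg
  obtain ⟨r, hu⟩ := hg.exists_eq_coe_of_mem_subdiff_s13 hy
  refine ⟨c, hc, fun z => ?_⟩
  have hsmall : Tendsto (fun p : ℝ × F => p.1 • p.2) (𝓝[>] 0 ×ˢ 𝓝 z) (𝓝 0) := by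
    have hfst : Tendsto (fun p : ℝ × F => p.1) (𝓝[>] 0 ×ˢ 𝓝 z) (𝓝 0) :=
      tendsto_fst.mono_right nhdsWithin_le_nhds
    simpa using hfst.smul tendsto_snd
  filter_upwards [eventually_mem_nhdsWithin.prod_inl _, hsmall (ball_mem_nhds 0 hε)]
    with p hp hpε
  refine coe_mul_sq_div_le_secondDiffQuot hg.1 hu hp ?_
  simpa using hgrowth (u + p.1 • p.2) (by simpa using hpε)

lemma QuadGrowth.mem_tanCone_of_secondSubderiv_nonpos (hg : ProperFn g) (hy : y ∈ subdiff g u)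
    (hqg : QuadGrowth g u y) {z : F} (hz : secondSubderiv g u y z ≤ 0) :
    z ∈ tanCone {u' | y ∈ subdiff g u'} u := by
  obtain ⟨c, hc, hbound⟩ := hqg.eventually_le_secondDiffQuot hg hy
  refine mem_tanCone_of_frequently_infDist_lt ⟨u, hy⟩ fun δ hδ => ?_
  have hsmall : ∃ᶠ p : ℝ × F in 𝓝[>] 0 ×ˢ 𝓝 z,
      secondDiffQuot g u y p.1 p.2 < ((c * δ ^ 2 : ℝ) : EReal) :=
    frequently_lt_of_liminf_lt isCobounded_ge_of_top <|
      hz.trans_lt (EReal.coe_pos.2 (by positivity))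
  have hpos : ∀ᶠ p : ℝ × F in 𝓝[>] 0 ×ˢ 𝓝 z, p.1 ∈ Ioi 0 :=
    eventually_mem_nhdsWithin.prod_inl _
  refine (hsmall.and_eventually ((hbound z).and hpos)).mono fun p ⟨hlt, hle, hp⟩ => ?_
  have hq : (infDist (u + p.1 • p.2) {u' | y ∈ subdiff g u'} / p.1) ^ 2 < δ ^ 2 :=
    lt_of_mul_lt_mul_left (EReal.coe_lt_coe_iff.1 (hle.trans_lt hlt)) hc.le
  rw [← div_lt_iff₀' hp]
  exact lt_of_pow_lt_pow_left₀ 2 hδ.le hq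

end QuadraticGrowth

theorem stmt13_general {E F : Type*} [NormedAddCommGroup E] [InnerProductSpace ℝ E]
    [NormedAddCommGroup F] [InnerProductSpace ℝ F]
    [FiniteDimensional ℝ E] [FiniteDimensional ℝ F]
    (g : F → EReal) (hproper : ProperFn g)
    (K : E →ₗ[ℝ] F) (xb vb : E) (yb : F)
    (hyb : yb ∈ subdiff g (K xb)) (hadj : LinearMap.adjoint K yb = vb)
    (hqg : QuadGrowth g (K xb) yb) :
    ∀ w : E, secondSubderiv (fun x => g (K x)) xb vb w = 0 →
      K w ∈ tanCone (subdiff (conjFn g) yb) (K xb) := by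
  intro w hw
  subst hadj
  have hKw : secondSubderiv g (K xb) yb (K w) ≤ 0 :=
    (secondSubderiv_le_secondSubderiv_comp g K xb yb w).trans hw.le
  refine tanCone_mono (fun u hu => mem_subdiff_conjFn_of_mem_subdiff_s13 hproper hu) (K xb) ?_
  exact hqg.mem_tanCone_of_secondSubderiv_nonpos hproper hyb hKw

/-- `Ker d²h(xb|vb) ⊆ K⁻¹(T_{∂g*(yb)}(Kxb))` for `h = g ∘ K` under the
quadratic growth condition of `g` at `Kxb` for `yb`. -/
theorem stmt13 {E F : Type*} [NormedAddCommGroup E] [InnerProductSpace ℝ E]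
    [NormedAddCommGroup F] [InnerProductSpace ℝ F]
    [FiniteDimensional ℝ E] [FiniteDimensional ℝ F]
    (g : F → EReal) (hproper : ProperFn g) (hlsc : LowerSemicontinuous g)
    (hconv : ConvexFn g) (K : E →ₗ[ℝ] F) (xb vb : E) (yb : F)
    (hyb : yb ∈ subdiff g (K xb)) (hadj : LinearMap.adjoint K yb = vb)
    (hqg : QuadGrowth g (K xb) yb) :
    ∀ w : E, secondSubderiv (fun x => g (K x)) xb vb w = 0 →
      K w ∈ tanCone (subdiff (conjFn g) yb) (K xb) :=
  stmt13_general g hproper K xb vb yb hyb hadj hqg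

end
end
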